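/- arXiv:2604.05726 — 3 statements merged into one kernel-verified Lean document; each statement's English description precedes it below -/
import Mathlib

section
/- Let (F_k)_{k≥0} be a sequence of nonnegative reals with F₁ = F₀ satisfying F_{k+1} ≤ a₁F_k + a₂F_{k-1} + a₃ for all k ≥ 1, where a₁ ≥ 0, a₂ ≥ 0, a₃ ≥ 0, a₁ + a₂ < 1, and a₁ + a₂ > 0. Set q = (a₁ + √(a₁² + 4a₂))/2 and ε = q - a₁. Then for all k ≥ 1, F_k ≤ q^{k-1}(1 + ε)F₀ + a₃/(1 - q). -/
theorem generalized_recursive_relation (a₁ a₂ a₃ : ℝ) (h1 : 0 ≤ a₁) (h2 : 0 ≤ a₂)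
    (h3 : 0 ≤ a₃) (hsum : a₁ + a₂ < 1) (hpos : 0 < a₁ + a₂)
    (F : ℕ → ℝ) (hF : ∀ k, 0 ≤ F k) (hF10 : F 1 = F 0)
    (hrec : ∀ k, 1 ≤ k → F (k + 1) ≤ a₁ * F k + a₂ * F (k - 1) + a₃) :
    ∀ k, 1 ≤ k →
      F k ≤ ((a₁ + Real.sqrt (a₁ ^ 2 + 4 * a₂)) / 2) ^ (k - 1) *
          (1 + ((a₁ + Real.sqrt (a₁ ^ 2 + 4 * a₂)) / 2 - a₁)) * F 0 +
        a₃ / (1 - (a₁ + Real.sqrt (a₁ ^ 2 + 4 * a₂)) / 2) := by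
  set s := Real.sqrt (a₁ ^ 2 + 4 * a₂) with hs_def
  have hsnn : 0 ≤ s := Real.sqrt_nonneg _
  have hs : s ^ 2 = a₁ ^ 2 + 4 * a₂ := Real.sq_sqrt (by positivity)
  have hsa : a₁ ≤ s := by nlinarith
  set q := (a₁ + s) / 2 with hq_def
  have ha1 : a₁ < 1 := by linarith
  have hq1 : q < 1 := by
    have : s < 2 - a₁ := by nlinarith
    rw [hq_def]; linarith
  have hq0 : 0 < q := by
    rcases lt_or_ge 0 a₁ with h | h
    · rw [hq_def]; linarith
    · have ha0 : a₁ = 0 := le_antisymm h h1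
      have : 0 < s := by
        have : 0 < s ^ 2 := by nlinarith
        nlinarith
      rw [hq_def]; linarith
  have hqe : q ^ 2 = a₁ * q + a₂ := by rw [hq_def]; nlinarith [hs]
  set ε := q - a₁ with hε_def
  have hε : 0 ≤ ε := by rw [hε_def, hq_def]; linarith
  have ha2 : a₂ = q * ε := by rw [hε_def]; nlinarith [hqe]
  have hd : 0 < 1 - q := by linarith
  have key : ∀ k, 1 ≤ k →
      F k + ε * F (k - 1) ≤ q ^ (k - 1) * (1 + ε) * F 0 + a₃ / (1 - q) := by
    intro k hk
    induction k, hk using Nat.le_induction with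
    | base =>
      have h0 : 0 ≤ a₃ / (1 - q) := div_nonneg h3 hd.le
      simp only [Nat.sub_self, pow_zero, hF10]
      nlinarith [hF 0]
    | succ k hk ih =>
      have h1' : F (k + 1) + ε * F k ≤ q * (F k + ε * F (k - 1)) + a₃ := by
        have hr := hrec k hk
        have heq : q * (F k + ε * F (k - 1)) + a₃
            = a₁ * F k + a₂ * F (k - 1) + a₃ + ε * F k := by
          rw [ha2, hε_def]; ring
        linarith
      have hpow : q ^ k = q * q ^ (k - 1) := by
        conv_lhs => rw [show k = (k - 1) + 1 by omega]
        rw [pow_succ]; ring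
      have step2 : q * (F k + ε * F (k - 1)) + a₃
          ≤ q * (q ^ (k - 1) * (1 + ε) * F 0 + a₃ / (1 - q)) + a₃ := by
        have := mul_le_mul_of_nonneg_left ih hq0.le
        linarith
      have step3 : q * (q ^ (k - 1) * (1 + ε) * F 0 + a₃ / (1 - q)) + a₃
          = q ^ ((k + 1) - 1) * (1 + ε) * F 0 + a₃ / (1 - q) := by
        have hne : (1 - q) ≠ 0 := ne_of_gt hd
        simp only [Nat.add_sub_cancel]
        rw [hpow]
        field_simp
        ring
      calc F (k + 1) + ε * F k ≤ q * (F k + ε * F (k - 1)) + a₃ := h1'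
        _ ≤ q * (q ^ (k - 1) * (1 + ε) * F 0 + a₃ / (1 - q)) + a₃ := step2
        _ = q ^ ((k + 1) - 1) * (1 + ε) * F 0 + a₃ / (1 - q) := step3
  intro k hk
  have hk' := key k hk
  exact le_trans (le_add_of_nonneg_right (mul_nonneg hε (hF (k - 1)))) hk'
end

section
/- Let A be an m×n real matrix with nonzero columns, Z ∈ ℝ^{m×p}, and B⊥ ∈ ℝ^{m×p} with AᵀB⊥ = 0. For each column index j, let P_j = I - A_{:,j}A_{:,j}ᵀ/‖A_{:,j}‖₂². Then the weighted average ∑_j (‖A_{:,j}ᵀZ‖₂²/‖AᵀZ‖_F²) ‖P_j(Z - B⊥)‖_F² equals ‖Z - B⊥‖_F² - (1/‖AᵀZ‖_F²) ∑_j ‖A_{:,j}ᵀZ‖₂⁴/‖A_{:,j}‖₂². -/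
open Matrix

lemma proj_norm (m p : ℕ) (a : Fin m → ℝ) (ha : a ≠ 0)
    (W : Matrix (Fin m) (Fin p) ℝ) :
    (∑ i, ∑ l,
      ((((1 : Matrix (Fin m) (Fin m) ℝ) -
          (∑ i', (a i') ^ 2)⁻¹ • Matrix.vecMulVec a a) * W) i l) ^ 2) =
    (∑ i, ∑ l, (W i l) ^ 2) -
      (∑ i', (a i') ^ 2)⁻¹ * ∑ l, (∑ i, a i * W i l) ^ 2 := by
  set na := ∑ i', (a i') ^ 2 with hna
  have hna0 : 0 < na := by
    have : ∃ i, a i ≠ 0 := by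
      by_contra h
      push_neg at h
      exact ha (funext h)
    obtain ⟨i, hi⟩ := this
    exact Finset.sum_pos' (fun i _ => sq_nonneg _) ⟨i, Finset.mem_univ i, by positivity⟩
  have hentry : ∀ i l, ((((1 : Matrix (Fin m) (Fin m) ℝ) -
          na⁻¹ • Matrix.vecMulVec a a) * W) i l)
      = W i l - na⁻¹ * (a i * ∑ k, a k * W k l) := by
    intro i l
    rw [Matrix.sub_mul, Matrix.one_mul, Matrix.sub_apply, Matrix.smul_mul,
      Matrix.smul_apply, Matrix.mul_apply]
    simp [Matrix.vecMulVec_apply, Finset.mul_sum, mul_assoc]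
  simp_rw [hentry]
  have expand : ∀ i l, (W i l - na⁻¹ * (a i * ∑ k, a k * W k l)) ^ 2
      = (W i l) ^ 2 - 2 * na⁻¹ * (W i l * a i * (∑ k, a k * W k l))
        + na⁻¹ ^ 2 * ((a i) ^ 2 * (∑ k, a k * W k l) ^ 2) := by
    intro i l; ring
  simp_rw [expand, Finset.sum_add_distrib, Finset.sum_sub_distrib,
    ← Finset.mul_sum]
  have h2 : ∑ i, ∑ l, W i l * a i * (∑ k, a k * W k l)
      = ∑ l, (∑ k, a k * W k l) ^ 2 := by
    rw [Finset.sum_comm]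
    refine Finset.sum_congr rfl fun l _ => ?_
    rw [← Finset.sum_mul, sq]
    congr 1
    exact Finset.sum_congr rfl fun i _ => by ring
  have h3 : ∑ i, (a i) ^ 2 * ∑ l, (∑ k, a k * W k l) ^ 2
      = na * ∑ l, (∑ k, a k * W k l) ^ 2 := by
    rw [← Finset.sum_mul]
  rw [h2, h3]
  have : na ≠ 0 := ne_of_gt hna0
  field_simp
  ring

open Matrix

theorem drek_dual_expectation (m n p : ℕ)
    (A : Matrix (Fin m) (Fin n) ℝ) (hcols : ∀ j, (fun i => A i j) ≠ 0)
    (Z Bperp : Matrix (Fin m) (Fin p) ℝ)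
    (hB : Aᵀ * Bperp = 0) (hZ : Aᵀ * Z ≠ 0) :
    (∑ j, ((∑ l, (∑ i, A i j * Z i l) ^ 2) / (∑ j', ∑ l, (∑ i, A i j' * Z i l) ^ 2)) *
        (∑ i, ∑ l,
          ((((1 : Matrix (Fin m) (Fin m) ℝ) -
              (∑ i', (A i' j) ^ 2)⁻¹ •
                Matrix.vecMulVec (fun i' => A i' j) (fun i' => A i' j)) *
            (Z - Bperp)) i l) ^ 2)) =
      (∑ i, ∑ l, (Z i l - Bperp i l) ^ 2) -
        (1 / (∑ j', ∑ l, (∑ i, A i j' * Z i l) ^ 2)) *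
          ∑ j, ((∑ l, (∑ i, A i j * Z i l) ^ 2) ^ 2 / (∑ i, (A i j) ^ 2)) := by
  set t : Fin n → ℝ := fun j => ∑ l, (∑ i, A i j * Z i l) ^ 2 with ht
  set T : ℝ := ∑ j', t j' with hT
  have hsZ : ∀ j l, ∑ i, A i j * (Z i l - Bperp i l) = ∑ i, A i j * Z i l := by
    intro j l
    have hb : ∑ i, A i j * Bperp i l = 0 := by
      have := congrFun (congrFun hB j) l
      simpa [Matrix.mul_apply, Matrix.transpose_apply] using this
    simp only [mul_sub, Finset.sum_sub_distrib, hb, sub_zero]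
  have hT0 : 0 < T := by
    have : ∃ j l, (Aᵀ * Z) j l ≠ 0 := by
      by_contra h
      push_neg at h
      exact hZ (by ext j l; exact h j l)
    obtain ⟨j, l, hjl⟩ := this
    have hjl' : (∑ i, A i j * Z i l) ≠ 0 := by
      simpa [Matrix.mul_apply, Matrix.transpose_apply] using hjl
    have htj : 0 < t j :=
      Finset.sum_pos' (fun _ _ => sq_nonneg _) ⟨l, Finset.mem_univ l, by positivity⟩
    exact Finset.sum_pos' (fun _ _ => Finset.sum_nonneg fun _ _ => sq_nonneg _)
      ⟨j, Finset.mem_univ j, htj⟩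
  have hTne : T ≠ 0 := ne_of_gt hT0
  set SW : ℝ := ∑ i, ∑ l, (Z i l - Bperp i l) ^ 2 with hSW
  have key : ∀ j, (∑ i, ∑ l,
      ((((1 : Matrix (Fin m) (Fin m) ℝ) -
          (∑ i', (A i' j) ^ 2)⁻¹ •
            Matrix.vecMulVec (fun i' => A i' j) (fun i' => A i' j)) *
        (Z - Bperp)) i l) ^ 2) = SW - (∑ i', (A i' j) ^ 2)⁻¹ * t j := by
    intro j
    rw [proj_norm m p (fun i => A i j) (hcols j) (Z - Bperp)]
    simp only [hsZ, ht, hSW, Matrix.sub_apply]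
  simp_rw [key]
  have hna : ∀ j, (0 : ℝ) < ∑ i', (A i' j) ^ 2 := by
    intro j
    have : ∃ i, A i j ≠ 0 := by
      by_contra h
      push_neg at h
      exact hcols j (funext h)
    obtain ⟨i, hi⟩ := this
    exact Finset.sum_pos' (fun _ _ => sq_nonneg _) ⟨i, Finset.mem_univ i, by positivity⟩
  have hrw : ∀ j, t j / T * (SW - (∑ i', (A i' j) ^ 2)⁻¹ * t j)
      = (t j * SW - (t j) ^ 2 / (∑ i', (A i' j) ^ 2)) / T := by
    intro j
    rw [div_mul_eq_mul_div]
    congr 1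
    rw [mul_sub]
    congr 1
    field_simp
  change ∑ j, t j / T * _ = SW - 1 / T * ∑ j, (t j) ^ 2 / ∑ i, (A i j) ^ 2
  simp_rw [hrw, ← Finset.sum_div, Finset.sum_sub_distrib, ← Finset.sum_mul, ← hT,
    sub_div, mul_div_cancel_left₀ _ hTne]
  rw [div_eq_mul_inv, one_div, mul_comm]
end

section
/- Let A be an m×n real matrix with nonzero rows and nonzero columns, B ∈ ℝ^{m×p}, and X* = A⁺B its minimal Frobenius-norm least-squares solution. Write B = B̂ + B⊥ with B̂ = AX* (columns in range(A)) and AᵀB⊥ = 0. For any Y ∈ ℝ^{n×p} and row index i with A_{i,:} ≠ 0 and any Z ∈ ℝ^{m×p}, the updated iterate X⁺ = Y + A_{i,:}ᵀ(B_{i,:} - Z_{i,:} - A_{i,:}Y)/‖A_{i,:}‖₂² satisfies ‖X⁺ - X*‖_F² ≤ ‖(I - A_{i,:}ᵀA_{i,:}/‖A_{i,:}‖₂²)(Y - X*)‖_F² + ‖B⊥_{i,:} - Z_{i,:}‖₂²/‖A_{i,:}‖₂². -/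
open Matrix Finset

lemma kaczmarz_key {n p : ℕ} (a : Fin n → ℝ) (F : Fin n → Fin p → ℝ) (e : Fin p → ℝ)
    (c : ℝ) (hc : 0 < c) (hca : c = ∑ j, a j ^ 2)
    (hF : ∀ l, ∑ j, a j * F j l = 0) :
    ∑ j, ∑ l, (F j l + c⁻¹ * a j * e l) ^ 2
      = (∑ j, ∑ l, (F j l) ^ 2) + (∑ l, e l ^ 2) / c := by
  have h1 : ∀ j l, (F j l + c⁻¹ * a j * e l) ^ 2
      = (F j l)^2 + (2 * c⁻¹) * (e l * (a j * F j l)) + c⁻¹ * c⁻¹ * (a j ^2 * e l ^2) := by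
    intro j l; ring
  simp only [h1, Finset.sum_add_distrib, ← Finset.mul_sum]
  have h2 : ∑ j : Fin n, ∑ l : Fin p, e l * (a j * F j l) = 0 := by
    rw [Finset.sum_comm]
    refine Finset.sum_eq_zero fun l _ => ?_
    rw [← Finset.mul_sum, hF l, mul_zero]
  have h3 : ∑ j : Fin n, ∑ l : Fin p, e l * (a j * F j l) = 0 := h2
  rw [h2]
  rw [← Finset.sum_mul, ← hca]
  field_simp
  ring

theorem kaczmarz_update_error_bound (m n p : ℕ)
    (A : Matrix (Fin m) (Fin n) ℝ)
    (hrows : ∀ i, (fun j => A i j) ≠ 0)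
    (hcols : ∀ j, (fun i => A i j) ≠ 0)
    (B Bperp Z : Matrix (Fin m) (Fin p) ℝ)
    (Xstar Y : Matrix (Fin n) (Fin p) ℝ)
    (hdecomp : B = A * Xstar + Bperp)
    (hperp : Aᵀ * Bperp = 0)
    (hXstar : ∀ l, ∃ u : Fin m → ℝ, Aᵀ.mulVec u = fun j => Xstar j l)
    (i : Fin m) :
    (∑ j, ∑ l,
        (((Y + (∑ j', (A i j') ^ 2)⁻¹ •
            Matrix.vecMulVec (fun j' => A i j')
              (fun l => B i l - Z i l - ∑ j', A i j' * Y j' l)) - Xstar) j l) ^ 2) ≤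
      (∑ j, ∑ l,
        ((((1 : Matrix (Fin n) (Fin n) ℝ) -
            (∑ j', (A i j') ^ 2)⁻¹ •
              Matrix.vecMulVec (fun j' => A i j') (fun j' => A i j')) *
          (Y - Xstar)) j l) ^ 2) +
      (∑ l, (Bperp i l - Z i l) ^ 2) / (∑ j', (A i j') ^ 2) := by
  set c : ℝ := ∑ j', (A i j')^2 with hcdef
  have hc : 0 < c := by
    rcases Function.ne_iff.mp (hrows i) with ⟨j0, hj0⟩
    have hj0' : A i j0 ≠ 0 := hj0
    have h0 : 0 < (A i j0)^2 := by positivity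
    rw [hcdef]
    exact h0.trans_le (Finset.single_le_sum (fun j _ => sq_nonneg (A i j)) (Finset.mem_univ j0))
  have hB : ∀ l, B i l = (∑ j', A i j' * Xstar j' l) + Bperp i l := by
    intro l
    rw [hdecomp]
    simp [Matrix.add_apply, Matrix.mul_apply]
  set F : Fin n → Fin p → ℝ := fun j l =>
    (Y j l - Xstar j l) - c⁻¹ * A i j * (∑ j', A i j' * (Y j' l - Xstar j' l)) with hFdef
  have hsplit : ∀ l, ∑ j', A i j' * (Y j' l - Xstar j' l)
      = (∑ j', A i j' * Y j' l) - (∑ j', A i j' * Xstar j' l) := by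
    intro l
    rw [← Finset.sum_sub_distrib]
    exact Finset.sum_congr rfl fun _ _ => by ring
  have hRHS : ∀ j l, (((1 : Matrix (Fin n) (Fin n) ℝ) -
      c⁻¹ • vecMulVec (fun j' => A i j') (fun j' => A i j')) * (Y - Xstar)) j l = F j l := by
    intro j l
    rw [Matrix.sub_mul, Matrix.one_mul, Matrix.sub_apply, Matrix.smul_mul, Matrix.smul_apply,
      Matrix.mul_apply]
    simp only [vecMulVec_apply, Matrix.sub_apply, smul_eq_mul, hFdef]
    congr 1
    rw [Finset.mul_sum, Finset.mul_sum]
    exact Finset.sum_congr rfl fun k _ => by ring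
  have hLHS : ∀ j l, ((Y + c⁻¹ • vecMulVec (fun j' => A i j')
      (fun l => B i l - Z i l - ∑ j', A i j' * Y j' l)) - Xstar) j l
      = F j l + c⁻¹ * A i j * (Bperp i l - Z i l) := by
    intro j l
    simp only [Matrix.sub_apply, Matrix.add_apply, Matrix.smul_apply, vecMulVec_apply,
      smul_eq_mul, hB l, hFdef, hsplit l]
    ring
  have hF0 : ∀ l, ∑ j, A i j * F j l = 0 := by
    intro l
    have h1 : ∀ j, A i j * F j l
        = A i j * (Y j l - Xstar j l)
          - (c⁻¹ * (∑ j', A i j' * (Y j' l - Xstar j' l))) * (A i j)^2 := by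
      intro j; simp only [hFdef]; ring
    simp only [h1]
    rw [Finset.sum_sub_distrib, ← Finset.mul_sum, ← hcdef]
    field_simp
    ring
  have hkey := kaczmarz_key (fun j => A i j) F (fun l => Bperp i l - Z i l) c hc hcdef hF0
  calc (∑ j, ∑ l,
        (((Y + c⁻¹ • Matrix.vecMulVec (fun j' => A i j')
              (fun l => B i l - Z i l - ∑ j', A i j' * Y j' l)) - Xstar) j l) ^ 2)
      = ∑ j, ∑ l, (F j l + c⁻¹ * A i j * (Bperp i l - Z i l)) ^ 2 := by
        exact Finset.sum_congr rfl fun j _ => Finset.sum_congr rfl fun l _ => by rw [hLHS]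
    _ = (∑ j, ∑ l, (F j l) ^ 2) + (∑ l, (Bperp i l - Z i l) ^ 2) / c := hkey
    _ = (∑ j, ∑ l,
        ((((1 : Matrix (Fin n) (Fin n) ℝ) -
            c⁻¹ • Matrix.vecMulVec (fun j' => A i j') (fun j' => A i j')) *
          (Y - Xstar)) j l) ^ 2) + (∑ l, (Bperp i l - Z i l) ^ 2) / c := by
        congr 1
        exact Finset.sum_congr rfl fun j _ => Finset.sum_congr rfl fun l _ => by rw [hRHS]
    _ ≤ _ := le_refl _
end
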